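/- Upper bound for directed Ricci curvature on edges: for every edge (x,y) ∈ E, κ(x,y) ≤ 𝒫(x,y) + 𝒫(y,x) + min{Σ_{z∈𝒩_x∩𝒩_y}𝒫(x,z), Σ_{z∈𝒩_x∩𝒩_y}𝒫(y,z)}. In particular κ(x,y) ≤ 1 + 𝒫(y,x). -/
import Mathlib


open Finset Filter Topology MeasureTheory
open scoped Classical

noncomputable section

variable {V : Type*}

/-- Vertex weight `μ(x) = Σ_y μ_{xy}`. -/
def vdeg [Fintype V] (μ : V → V → ℝ) (x : V) : ℝ := ∑ y, μ x y

/-- Transition probability kernel `P(x,y) = μ_{xy}/μ(x)`. -/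
def transP [Fintype V] (μ : V → V → ℝ) (x y : V) : ℝ := μ x y / vdeg μ x

/-- `m` is the Perron measure of `(V,μ)`. -/
def IsPerron [Fintype V] (μ : V → V → ℝ) (m : V → ℝ) : Prop :=
  (∀ x, 0 < m x) ∧ (∑ x, m x = 1) ∧ ∀ x, m x = ∑ y, m y * transP μ y x

/-- Mean transition probability kernel `𝒫 = (P + ←P)/2`. -/
def meanK [Fintype V] (μ : V → V → ℝ) (m : V → ℝ) (x y : V) : ℝ :=
  (transP μ x y + m y / m x * transP μ y x) / 2

/-- There is a directed path of length `n` from `x` to `y`. -/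
def HasPathLen (μ : V → V → ℝ) (x y : V) (n : ℕ) : Prop :=
  ∃ c : ℕ → V, c 0 = x ∧ c n = y ∧ ∀ i < n, 0 < μ (c i) (c (i + 1))

/-- The (non-symmetric) graph distance. -/
def gdist (μ : V → V → ℝ) (x y : V) : ℝ :=
  sInf {r : ℝ | ∃ n : ℕ, (r : ℝ) = (n : ℝ) ∧ HasPathLen μ x y n}

/-- The graph is simple: no loops. -/
def IsSimpleW (μ : V → V → ℝ) : Prop := ∀ x, μ x x = 0

/-- The edge weight is nonnegative. -/
def Nonneg (μ : V → V → ℝ) : Prop := ∀ x y, 0 ≤ μ x y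

/-- The graph is strongly connected. -/
def StronglyConnectedW (μ : V → V → ℝ) : Prop := ∀ x y, ∃ n, HasPathLen μ x y n

/-- `π` is a coupling of the probability measures `ν₀, ν₁`. -/
def IsCoupling [Fintype V] (π : V → V → ℝ) (ν₀ ν₁ : V → ℝ) : Prop :=
  (∀ x y, 0 ≤ π x y) ∧ (∀ x, ∑ y, π x y = ν₀ x) ∧ (∀ y, ∑ x, π x y = ν₁ y)

/-- The L¹-Wasserstein distance with cost `d`. -/
def Wass [Fintype V] (d : V → V → ℝ) (ν₀ ν₁ : V → ℝ) : ℝ :=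
  sInf {c : ℝ | ∃ π, IsCoupling π ν₀ ν₁ ∧ c = ∑ x, ∑ y, d x y * π x y}

/-- The probability measure `ν^ε_x`. -/
def nu [Fintype V] (P : V → V → ℝ) (ε : ℝ) (x z : V) : ℝ :=
  if z = x then 1 - ε else ε * P x z

/-- `κ_ε(x,y) = 1 − W(ν^ε_x, ν^ε_y)/d(x,y)`. -/
def kappaEps [Fintype V] (μ : V → V → ℝ) (m : V → ℝ) (ε : ℝ) (x y : V) : ℝ :=
  1 - Wass (gdist μ) (nu (meanK μ m) ε x) (nu (meanK μ m) ε y) / gdist μ x y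

/-- The (positive) Chung Laplacian associated with a kernel `P`. -/
def chungL [Fintype V] (P : V → V → ℝ) (f : V → ℝ) (x : V) : ℝ :=
  f x - ∑ y, P x y * f y

/-- The negative Laplacian `Δ = −ℒ`. -/
def negL [Fintype V] (P : V → V → ℝ) (f : V → ℝ) (x : V) : ℝ :=
  (∑ y, P x y * f y) - f x

/-- `f` is 1-Lipschitz with respect to the non-symmetric distance `d`. -/
def Lip1 (d : V → V → ℝ) (f : V → ℝ) : Prop := ∀ x y, f y - f x ≤ d x y

/-- The asymptotic mean curvature `ℋ_x = ℒρ_x(x)`. -/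
def Hout [Fintype V] (μ : V → V → ℝ) (m : V → ℝ) (x : V) : ℝ :=
  chungL (meanK μ m) (fun y => gdist μ x y) x

/-- The reverse asymptotic mean curvature `←ℋ_x = ℒ←ρ_x(x)`. -/
def Hin [Fintype V] (μ : V → V → ℝ) (m : V → ℝ) (x : V) : ℝ :=
  chungL (meanK μ m) (fun y => gdist μ y x) x

/-- The mixed asymptotic mean curvature `ℋ(x,y) = −(ℋ_x + ←ℋ_y)`. -/
def Hmix [Fintype V] (μ : V → V → ℝ) (m : V → ℝ) (x y : V) : ℝ :=
  -(Hout μ m x + Hin μ m y)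

/-- The neighborhood `𝒩_x = N_x ∪ ←N_x`. -/
def nbr [Fintype V] (μ : V → V → ℝ) (x : V) : Finset V :=
  Finset.univ.filter (fun y => 0 < μ x y ∨ 0 < μ y x)



lemma gdist_nonneg' (μ : V → V → ℝ) (a b : V) : 0 ≤ gdist μ a b :=
  Real.sInf_nonneg (by rintro r ⟨n, rfl, -⟩; positivity)

lemma one_le_gdist (μ : V → V → ℝ) (hconn : StronglyConnectedW μ) {a b : V} (hab : a ≠ b) :
    1 ≤ gdist μ a b := by
  obtain ⟨n, hp⟩ := hconn a b
  refine le_csInf ⟨n, n, rfl, hp⟩ ?_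
  rintro r ⟨n', rfl, c, h0, hn, -⟩
  have hne : n' ≠ 0 := by rintro rfl; exact hab (h0.symm.trans hn)
  exact_mod_cast Nat.one_le_iff_ne_zero.mpr hne

lemma gdist_eq_one (μ : V → V → ℝ) (hconn : StronglyConnectedW μ) {a b : V} (hab : a ≠ b)
    (h : 0 < μ a b) : gdist μ a b = 1 := by
  refine le_antisymm ?_ (one_le_gdist μ hconn hab)
  refine csInf_le ⟨0, ?_⟩ ⟨1, by norm_num, fun i => if i = 0 then a else b, by norm_num, by norm_num, ?_⟩
  · rintro r ⟨n, rfl, -⟩; positivity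
  · intro i hi
    interval_cases i
    simpa using h

lemma vdeg_pos (μ : V → V → ℝ) (hnn : Nonneg μ) (hconn : StronglyConnectedW μ)
    {u v : V} (huv : u ≠ v) [Fintype V] (a : V) : 0 < vdeg μ a := by
  set b := if a = u then v else u with hb
  have hab : a ≠ b := by
    by_cases h : a = u
    · rw [hb, if_pos h, h]; exact huv
    · rw [hb, if_neg h]; exact h
  obtain ⟨n, c, h0, hn, hstep⟩ := hconn a b
  have hn0 : n ≠ 0 := by rintro rfl; exact hab (h0.symm.trans hn)
  have hpos := hstep 0 (Nat.pos_of_ne_zero hn0)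
  rw [h0] at hpos
  exact Finset.sum_pos' (fun z _ => hnn a z) ⟨c 1, Finset.mem_univ _, hpos⟩

lemma meanK_nonneg [Fintype V] (μ : V → V → ℝ) (m : V → ℝ) (hnn : Nonneg μ)
    (hm : IsPerron μ m) (a b : V) : 0 ≤ meanK μ m a b := by
  have h1 : 0 ≤ transP μ a b := div_nonneg (hnn a b) (Finset.sum_nonneg fun z _ => hnn a z)
  have h2 : 0 ≤ transP μ b a := div_nonneg (hnn b a) (Finset.sum_nonneg fun z _ => hnn b z)
  have h3 : 0 ≤ m b / m a := le_of_lt (div_pos (hm.1 b) (hm.1 a))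
  exact div_nonneg (add_nonneg h1 (mul_nonneg h3 h2)) (by norm_num)

lemma meanK_self [Fintype V] (μ : V → V → ℝ) (m : V → ℝ) (hsimple : IsSimpleW μ) (a : V) :
    meanK μ m a a = 0 := by
  simp [meanK, transP, hsimple a]

lemma meanK_rowsum [Fintype V] (μ : V → V → ℝ) (m : V → ℝ) (hnn : Nonneg μ)
    (hconn : StronglyConnectedW μ) (hm : IsPerron μ m) {u v : V} (huv : u ≠ v) (a : V) :
    ∑ z, meanK μ m a z = 1 := by
  have h1 : ∑ z, transP μ a z = 1 := by
    unfold transP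
    rw [← Finset.sum_div]
    exact div_self (vdeg_pos μ hnn hconn huv a).ne'
  have h2 : ∑ z, m z / m a * transP μ z a = 1 := by
    have hma := (hm.1 a).ne'
    have hstep : ∑ z, m z / m a * transP μ z a = (∑ z, m z * transP μ z a) / m a := by
      rw [Finset.sum_div]
      exact Finset.sum_congr rfl fun z _ => by ring
    rw [hstep, ← hm.2.2 a, div_self hma]
  simp only [meanK]
  rw [← Finset.sum_div, Finset.sum_add_distrib, h1, h2]
  norm_num

lemma meanK_not_nbr [Fintype V] (μ : V → V → ℝ) (m : V → ℝ) (hnn : Nonneg μ)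
    {a b : V} (h : b ∉ nbr μ a) : meanK μ m a b = 0 := by
  simp only [nbr, Finset.mem_filter, Finset.mem_univ, true_and, not_or, not_lt] at h
  have h1 : μ a b = 0 := le_antisymm h.1 (hnn a b)
  have h2 : μ b a = 0 := le_antisymm h.2 (hnn b a)
  simp [meanK, transP, h1, h2]

lemma nu_sum [Fintype V] (P : V → V → ℝ) (a : V) (hrow : ∑ z, P a z = 1) (hPaa : P a a = 0)
    (ε : ℝ) : ∑ z, nu P ε a z = 1 := by
  have h : ∀ z, nu P ε a z = ε * P a z + (if z = a then 1 - ε else 0) := by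
    intro z
    unfold nu
    split_ifs with hz
    · rw [hz, hPaa]; ring
    · ring
  rw [Finset.sum_congr rfl fun z _ => h z, Finset.sum_add_distrib, ← Finset.mul_sum, hrow,
    Finset.sum_ite_eq' Finset.univ a, if_pos (Finset.mem_univ a)]
  ring

lemma nu_dot [Fintype V] (P : V → V → ℝ) (a : V) (hPaa : P a a = 0) (ε : ℝ) (f : V → ℝ) :
    ∑ z, f z * nu P ε a z = f a + ε * ((∑ z, P a z * f z) - f a) := by
  have h : ∀ z, f z * nu P ε a z = ε * (P a z * f z) + (if z = a then (1 - ε) * f a else 0) := by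
    intro z
    unfold nu
    split_ifs with hz
    · rw [hz, hPaa]; ring
    · ring
  rw [Finset.sum_congr rfl fun z _ => h z, Finset.sum_add_distrib, ← Finset.mul_sum,
    Finset.sum_ite_eq' Finset.univ a, if_pos (Finset.mem_univ a)]
  ring

lemma wass_ge [Fintype V] (d : V → V → ℝ) (ν₀ ν₁ : V → ℝ) (h₀ : ∀ z, 0 ≤ ν₀ z)
    (h₁ : ∀ z, 0 ≤ ν₁ z) (hs₀ : ∑ z, ν₀ z = 1) (hs₁ : ∑ z, ν₁ z = 1) (f : V → ℝ)
    (hf : Lip1 d f) : (∑ z, f z * ν₁ z) - (∑ z, f z * ν₀ z) ≤ Wass d ν₀ ν₁ := by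
  refine le_csInf ⟨_, ⟨fun a b => ν₀ a * ν₁ b, ⟨fun a b => mul_nonneg (h₀ a) (h₁ b),
    fun a => by rw [← Finset.mul_sum, hs₁, mul_one],
    fun b => by rw [← Finset.sum_mul, hs₀, one_mul]⟩, rfl⟩⟩ ?_
  rintro c ⟨π, ⟨hπ0, hπ1, hπ2⟩, rfl⟩
  calc (∑ z, f z * ν₁ z) - (∑ z, f z * ν₀ z)
      = ∑ a, ∑ b, (f b - f a) * π a b := by
        simp only [sub_mul, Finset.sum_sub_distrib]
        congr 1
        · rw [Finset.sum_comm]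
          exact Finset.sum_congr rfl fun b _ => by rw [← Finset.mul_sum, hπ2]
        · exact Finset.sum_congr rfl fun a _ => by rw [← Finset.mul_sum, hπ1]
    _ ≤ ∑ a, ∑ b, d a b * π a b :=
        Finset.sum_le_sum fun a _ => Finset.sum_le_sum fun b _ =>
          mul_le_mul_of_nonneg_right (hf a b) (hπ0 a b)

lemma kappa_le_of_indicator [Fintype V] (μ : V → V → ℝ) (m : V → ℝ)
    (hnn : Nonneg μ) (hsimple : IsSimpleW μ) (hconn : StronglyConnectedW μ)
    (hm : IsPerron μ m) (x y : V) (hedge : 0 < μ x y) (k : ℝ)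
    (hk : Tendsto (fun ε => kappaEps μ m ε x y / ε) (𝓝[>] (0:ℝ)) (𝓝 k))
    (f : V → ℝ) (hf01 : ∀ z, f z = 0 ∨ f z = 1) (hfx : f x = 0) (hfy : f y = 1) :
    k ≤ (∑ z, meanK μ m x z * f z) - (∑ z, meanK μ m y z * f z) + 1 := by
  have hxy : x ≠ y := by
    rintro rfl
    rw [hsimple x] at hedge
    exact lt_irrefl 0 hedge
  have hProw : ∀ a, ∑ z, meanK μ m a z = 1 := meanK_rowsum μ m hnn hconn hm hxy
  have hPnn : ∀ a b, 0 ≤ meanK μ m a b := meanK_nonneg μ m hnn hm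
  have hPself : ∀ a, meanK μ m a a = 0 := meanK_self μ m hsimple
  have hd1 : gdist μ x y = 1 := gdist_eq_one μ hconn hxy hedge
  have hLip : Lip1 (gdist μ) f := by
    intro a b
    rcases eq_or_ne a b with rfl | hab
    · simpa using gdist_nonneg' μ a a
    · have h1 := one_le_gdist μ hconn hab
      rcases hf01 a with ha | ha <;> rcases hf01 b with hb | hb <;> rw [ha, hb] <;>
        linarith [gdist_nonneg' μ a b]
  set C := (∑ z, meanK μ m x z * f z) - (∑ z, meanK μ m y z * f z) + 1 with hC
  refine le_of_tendsto hk ?_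
  filter_upwards [Ioo_mem_nhdsGT_of_mem (by norm_num : (0:ℝ) ∈ Set.Ico (0:ℝ) 1)] with ε hε
  obtain ⟨hε0, hε1⟩ := hε
  have hnu : ∀ a z, 0 ≤ nu (meanK μ m) ε a z := by
    intro a z
    unfold nu
    split_ifs
    · linarith
    · exact mul_nonneg hε0.le (hPnn a z)
  have hnus : ∀ a, ∑ z, nu (meanK μ m) ε a z = 1 := fun a =>
    nu_sum (meanK μ m) a (hProw a) (hPself a) ε
  have hW := wass_ge (gdist μ) (nu (meanK μ m) ε x) (nu (meanK μ m) ε y)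
    (hnu x) (hnu y) (hnus x) (hnus y) f hLip
  rw [nu_dot (meanK μ m) x (hPself x) ε f, nu_dot (meanK μ m) y (hPself y) ε f,
    hfx, hfy] at hW
  have hexp : (1 + ε * ((∑ z, meanK μ m y z * f z) - 1))
      - (0 + ε * ((∑ z, meanK μ m x z * f z) - 0)) = 1 - ε * C := by
    rw [hC]; ring
  rw [hexp] at hW
  have hkap : kappaEps μ m ε x y ≤ ε * C := by
    unfold kappaEps
    rw [hd1, div_one]
    linarith
  calc kappaEps μ m ε x y / ε ≤ ε * C / ε := by gcongr
    _ = C := by field_simp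


/-- upper bound for the directed Ricci curvature on edges. -/
theorem ricci_upper_bound_edge
    {V : Type*} [Fintype V] (μ : V → V → ℝ) (m : V → ℝ)
    (hnn : Nonneg μ) (hsimple : IsSimpleW μ) (hconn : StronglyConnectedW μ)
    (hm : IsPerron μ m) (x y : V) (hedge : 0 < μ x y) (k : ℝ)
    (hk : Tendsto (fun ε => kappaEps μ m ε x y / ε) (𝓝[>] (0:ℝ)) (𝓝 k)) :
    k ≤ meanK μ m x y + meanK μ m y x
        + min (∑ z ∈ nbr μ x ∩ nbr μ y, meanK μ m x z)
            (∑ z ∈ nbr μ x ∩ nbr μ y, meanK μ m y z) ∧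
    k ≤ 1 + meanK μ m y x := by
  have hxy : x ≠ y := by
    rintro rfl
    rw [hsimple x] at hedge
    exact lt_irrefl 0 hedge
  have hProw : ∀ a, ∑ z, meanK μ m a z = 1 := meanK_rowsum μ m hnn hconn hm hxy
  have hPself : ∀ a, meanK μ m a a = 0 := meanK_self μ m hsimple
  have hsupp : ∀ a b, b ∉ nbr μ a → meanK μ m a b = 0 := fun a b h => meanK_not_nbr μ m hnn h
  have hxnx : x ∉ nbr μ x := by simp [nbr, hsimple x]
  have hyny : y ∉ nbr μ y := by simp [nbr, hsimple y]
  -- second bound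
  have hb0 : k ≤ 1 + meanK μ m y x := by
    have key := kappa_le_of_indicator μ m hnn hsimple hconn hm x y hedge k hk
      (fun z => if z = x then 0 else 1)
      (fun z => by by_cases h : z = x <;> simp [h])
      (by simp) (by simp [Ne.symm hxy])
    have hsum : ∀ a, (∑ z, meanK μ m a z * (if z = x then 0 else 1))
        = 1 - meanK μ m a x := by
      intro a
      have h1 : ∀ z, meanK μ m a z * (if z = x then 0 else 1)
          = meanK μ m a z - (if z = x then meanK μ m a z else 0) := by
        intro z; split_ifs <;> ring
      rw [Finset.sum_congr rfl fun z _ => h1 z, Finset.sum_sub_distrib, hProw a,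
        Finset.sum_ite_eq' Finset.univ x, if_pos (Finset.mem_univ x)]
    rw [hsum x, hsum y, hPself x] at key
    linarith
  refine ⟨?_, hb0⟩
  set I := nbr μ x ∩ nbr μ y with hI
  have hyI : y ∉ I := fun h => hyny (Finset.mem_inter.mp h).2
  have hxI : x ∉ I := fun h => hxnx (Finset.mem_inter.mp h).1
  -- left bound
  have hbL : k ≤ meanK μ m x y + meanK μ m y x + ∑ z ∈ I, meanK μ m x z := by
    set T := insert x (nbr μ x) \ insert y I with hT
    have hxT : x ∈ T := by
      rw [hT, Finset.mem_sdiff]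
      refine ⟨Finset.mem_insert_self x _, fun h => ?_⟩
      rcases Finset.mem_insert.mp h with h' | h'
      · exact hxy h'
      · exact hxI h'
    have hyT : y ∉ T := fun h => (Finset.mem_sdiff.mp h).2 (Finset.mem_insert_self y I)
    have key := kappa_le_of_indicator μ m hnn hsimple hconn hm x y hedge k hk
      (fun z => if z ∈ T then 0 else 1)
      (fun z => by by_cases h : z ∈ T <;> simp [h])
      (by simp [hxT]) (by simp [hyT])
    have hsum : ∀ a, (∑ z, meanK μ m a z * (if z ∈ T then 0 else 1))
        = 1 - ∑ z ∈ T, meanK μ m a z := by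
      intro a
      have h1 : ∀ z, meanK μ m a z * (if z ∈ T then 0 else 1)
          = meanK μ m a z - (if z ∈ T then meanK μ m a z else 0) := by
        intro z; split_ifs <;> ring
      rw [Finset.sum_congr rfl fun z _ => h1 z, Finset.sum_sub_distrib, hProw a,
        Finset.sum_ite_mem, Finset.univ_inter]
    rw [hsum x, hsum y] at key
    have hTy : ∑ z ∈ T, meanK μ m y z = meanK μ m y x := by
      refine Finset.sum_eq_single_of_mem x hxT fun b hb hbx => ?_
      refine hsupp y b fun hbny => ?_
      rw [hT, Finset.mem_sdiff] at hb
      rcases Finset.mem_insert.mp hb.1 with h' | hbnx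
      · exact hbx h'
      · exact hb.2 (Finset.mem_insert_of_mem (Finset.mem_inter.mpr ⟨hbnx, hbny⟩))
    have hTx : ∑ z ∈ T, meanK μ m x z
        = 1 - meanK μ m x y - ∑ z ∈ I, meanK μ m x z := by
      have hdisj : Disjoint T (insert y I) := Finset.sdiff_disjoint
      have hU : (1:ℝ) = ∑ z ∈ T ∪ insert y I, meanK μ m x z := by
        rw [← hProw x]
        refine (Finset.sum_subset (Finset.subset_univ _) fun z _ hz => ?_).symm
        refine hsupp x z fun hznx => hz ?_
        by_cases h : z ∈ insert y I
        · exact Finset.mem_union_right _ h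
        · exact Finset.mem_union_left _
            (Finset.mem_sdiff.mpr ⟨Finset.mem_insert_of_mem hznx, h⟩)
      rw [Finset.sum_union hdisj, Finset.sum_insert hyI] at hU
      linarith
    rw [hTx, hTy] at key
    linarith
  -- right bound
  have hbR : k ≤ meanK μ m x y + meanK μ m y x + ∑ z ∈ I, meanK μ m y z := by
    set S := insert y ((nbr μ y \ nbr μ x).erase x) with hS
    have hxS : x ∉ S := by
      rw [hS]
      intro h
      rcases Finset.mem_insert.mp h with h' | h'
      · exact hxy h'
      · exact (Finset.mem_erase.mp h').1 rfl
    have hyS : y ∈ S := Finset.mem_insert_self y _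
    have key := kappa_le_of_indicator μ m hnn hsimple hconn hm x y hedge k hk
      (fun z => if z ∈ S then 1 else 0)
      (fun z => by by_cases h : z ∈ S <;> simp [h])
      (by simp [hxS]) (by simp [hyS])
    have hsum : ∀ a, (∑ z, meanK μ m a z * (if z ∈ S then 1 else 0))
        = ∑ z ∈ S, meanK μ m a z := by
      intro a
      have h1 : ∀ z, meanK μ m a z * (if z ∈ S then 1 else 0)
          = (if z ∈ S then meanK μ m a z else 0) := by
        intro z; split_ifs <;> ring
      rw [Finset.sum_congr rfl fun z _ => h1 z, Finset.sum_ite_mem, Finset.univ_inter]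
    rw [hsum x, hsum y] at key
    have hSx : ∑ z ∈ S, meanK μ m x z = meanK μ m x y := by
      refine Finset.sum_eq_single_of_mem y hyS fun b hb hby => ?_
      refine hsupp x b fun hbnx => ?_
      rw [hS] at hb
      rcases Finset.mem_insert.mp hb with h' | h'
      · exact hby h'
      · exact (Finset.mem_sdiff.mp (Finset.mem_of_mem_erase h')).2 hbnx
    have hSy : ∑ z ∈ S, meanK μ m y z
        = 1 - meanK μ m y x - ∑ z ∈ I, meanK μ m y z := by
      have hdisj : Disjoint S (insert x I) := by
        rw [Finset.disjoint_left]
        intro b hb hb'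
        rcases Finset.mem_insert.mp hb' with h' | hbI
        · exact hxS (h' ▸ hb)
        · rcases Finset.mem_insert.mp hb with h'' | hb''
          · exact hyny (h'' ▸ (Finset.mem_inter.mp hbI).2)
          · exact (Finset.mem_sdiff.mp (Finset.mem_of_mem_erase hb'')).2
              (Finset.mem_inter.mp hbI).1
      have hU : (1:ℝ) = ∑ z ∈ S ∪ insert x I, meanK μ m y z := by
        rw [← hProw y]
        refine (Finset.sum_subset (Finset.subset_univ _) fun z _ hz => ?_).symm
        refine hsupp y z fun hzny => hz ?_
        by_cases hznx : z ∈ nbr μ x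
        · exact Finset.mem_union_right _
            (Finset.mem_insert_of_mem (Finset.mem_inter.mpr ⟨hznx, hzny⟩))
        · rcases eq_or_ne z x with rfl | hzx
          · exact Finset.mem_union_right _ (Finset.mem_insert_self _ _)
          · exact Finset.mem_union_left _ (Finset.mem_insert_of_mem
              (Finset.mem_erase.mpr ⟨hzx, Finset.mem_sdiff.mpr ⟨hzny, hznx⟩⟩))
      rw [Finset.sum_union hdisj, Finset.sum_insert hxI] at hU
      linarith
    rw [hSx, hSy] at key
    linarith
  rcases min_cases (∑ z ∈ I, meanK μ m x z) (∑ z ∈ I, meanK μ m y z) with ⟨h, -⟩ | ⟨h, -⟩ <;>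
    rw [h]
  · exact hbL
  · exact hbR
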